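/- Let G be a connected locally finite graph with edge set E, let e ∈ E, and let λ, λ' : E → [0,1] be injective labellings that agree on every edge other than e. If e ∉ F_F(λ) and λ'(e) < Z_λ(e), then F_F(λ') = (F_F(λ) ∪ {e}) ∖ {φ(e,λ)}. -/

import Mathlib

/-!
Lowering the label of `e` below `Z_λ(e)` puts `e` into the forest, while `φ(e,λ)`, the largest
label off `e` on some cycle through `e`, becomes the largest label on that whole cycle. Every
other edge `g` keeps its status: if `g` is maximal off `e` on a cycle through `e`, then, as
`g ≠ φ(e,λ)`, some cycle through `e` has all its other labels below `λ(g)`, and eliminating `e`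
between these two cycles yields a cycle avoiding `e` on which `g` is still maximal.
-/

namespace MSF

variable {V : Type*}

/-- The free minimal spanning forest of an (injective) labelling: the set of edges `e` such
that there is no finite cycle of `G` containing `e` on which `lab e` is the maximal label. -/
def setFF (G : SimpleGraph V) (lab : G.edgeSet → ℝ) : Set G.edgeSet :=
  {e | ¬ ∃ (v : V) (c : G.Walk v v), c.IsCycle ∧ (e : Sym2 V) ∈ c.edges ∧
    ∀ e' : G.edgeSet, (e' : Sym2 V) ∈ c.edges → lab e' ≤ lab e}

/-- `Z_lab(e)`: the infimum, over finite cycles `C` of `G` containing `e`, of the maximal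
label on `C \ {e}` (equal to `∞` if no finite cycle contains `e`). -/
noncomputable def Z (G : SimpleGraph V) (lab : G.edgeSet → ℝ) (e : G.edgeSet) : ENNReal :=
  ⨅ (v : V) (c : {c : G.Walk v v // c.IsCycle ∧ (e : Sym2 V) ∈ c.edges}),
    sSup {x : ENNReal | ∃ e' : G.edgeSet,
      (e' : Sym2 V) ∈ (c : G.Walk v v).edges ∧ e' ≠ e ∧ x = ENNReal.ofReal (lab e')}

/-- `f` attains the infimum in the definition of `Z_lab(e)`: `f ≠ e` lies on a finite cycle
through `e` on which it has the maximal label among the edges `≠ e`, and this label equals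
`Z_lab(e)`. -/
def Attains (G : SimpleGraph V) (lab : G.edgeSet → ℝ) (e f : G.edgeSet) : Prop :=
  f ≠ e ∧ ENNReal.ofReal (lab f) = Z G lab e ∧
    ∃ (v : V) (c : G.Walk v v), c.IsCycle ∧ (e : Sym2 V) ∈ c.edges ∧
      (f : Sym2 V) ∈ c.edges ∧
      ∀ e' : G.edgeSet, (e' : Sym2 V) ∈ c.edges → e' ≠ e → lab e' ≤ lab f

/-- `φ(e,lab)`: the edge attaining the infimum in `Z_lab(e)` if it exists, `∅` otherwise. -/
noncomputable def phi (G : SimpleGraph V) (lab : G.edgeSet → ℝ) (e : G.edgeSet) :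
    Option G.edgeSet := by
  classical exact if h : ∃ f, Attains G lab e f then some h.choose else none

end MSF

namespace SimpleGraph

variable {V : Type*} {G : SimpleGraph V}

theorem Walk.IsCycle.exists_walk_of_mem_edges {u x y : V} {c : G.Walk u u} (hc : c.IsCycle)
    (hxy : s(x, y) ∈ c.edges) :
    ∃ p : G.Walk x y, ∀ f ∈ p.edges, f ∈ c.edges ∧ f ≠ s(x, y) := by
  -- Mathlib's cycle criterion for an edge, applied in the subgraph formed by the edges of `c`.
  let H := G.deleteEdges c.edgeSetᶜ
  have hcH : ∀ f ∈ c.edges, f ∈ H.edgeSet := fun f hf => by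
    simpa [H, edgeSet_deleteEdges] using ⟨c.edges_subset_edgeSet hf, hf⟩
  obtain ⟨-, hreach⟩ := adj_and_reachable_delete_edges_iff_exists_cycle.mpr
    ⟨u, c.transfer H hcH, hc.transfer hcH, by rwa [Walk.edges_transfer]⟩
  obtain ⟨p, hp⟩ := reachable_deleteEdges_iff_exists_walk.mp hreach
  refine ⟨p.mapLe (deleteEdges_le _), fun f hf => ?_⟩
  rw [Walk.edges_mapLe_eq_edges] at hf
  have hfH := p.edges_subset_edgeSet hf
  simp only [H, edgeSet_deleteEdges, Set.mem_sdiff, Set.mem_compl_iff, not_not] at hfH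
  exact ⟨hfH.2, ne_of_mem_of_not_mem hf hp⟩

theorem Walk.exists_walk_replace_edge {a b x y : V} (p : G.Walk a b) (q : G.Walk x y) :
    ∃ r : G.Walk a b, ∀ f ∈ r.edges, (f ∈ p.edges ∧ f ≠ s(x, y)) ∨ f ∈ q.edges := by
  induction p with
  | nil => exact ⟨nil, by simp⟩
  | @cons a a' b h p ih =>
    obtain ⟨r, hr⟩ := ih
    have hr' : ∀ f ∈ r.edges, (f ∈ (cons h p).edges ∧ f ≠ s(x, y)) ∨ f ∈ q.edges := fun f hf =>
      (hr f hf).imp_left fun ⟨hfp, hne⟩ => ⟨List.mem_cons_of_mem _ hfp, hne⟩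
    by_cases hxy : s(a, a') = s(x, y)
    · rcases Sym2.eq_iff.mp hxy with ⟨rfl, rfl⟩ | ⟨rfl, rfl⟩
      · refine ⟨q.append r, fun f hf => ?_⟩
        rcases List.mem_append.mp (edges_append q r ▸ hf) with hf | hf
        exacts [Or.inr hf, hr' f hf]
      · refine ⟨q.reverse.append r, fun f hf => ?_⟩
        rcases List.mem_append.mp (edges_append _ r ▸ hf) with hf | hf
        exacts [Or.inr (List.mem_reverse.mp (edges_reverse q ▸ hf)), hr' f hf]
    · refine ⟨cons h r, fun f hf => ?_⟩
      rcases List.mem_cons.mp hf with rfl | hf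
      exacts [Or.inl ⟨List.mem_cons_self, hxy⟩, hr' f hf]

theorem Adj.exists_isCycle_of_walk {a b : V} (h : G.Adj a b) (p : G.Walk a b)
    (hp : s(a, b) ∉ p.edges) :
    ∃ c : G.Walk b b, c.IsCycle ∧ s(a, b) ∈ c.edges ∧
      ∀ f ∈ c.edges, f = s(a, b) ∨ f ∈ p.edges := by
  classical
  have hpath : s(b, a) ∉ (p.toPath : G.Walk a b).edges := by
    rw [Sym2.eq_swap]; exact fun h' => hp (Walk.edges_toPath_subset_edges p h')
  refine ⟨Walk.cons h.symm p.toPath, Path.cons_isCycle _ _ hpath, by simp [Sym2.eq_swap], ?_⟩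
  intro f hf
  rw [Walk.edges_cons, List.mem_cons, Sym2.eq_swap] at hf
  exact hf.imp_right (Walk.edges_toPath_subset_edges p ·)

theorem Walk.IsCycle.strong_elimination {u₁ u₂ : V} {c₁ : G.Walk u₁ u₁}
    {c₂ : G.Walk u₂ u₂} (h₁ : c₁.IsCycle) (h₂ : c₂.IsCycle) {e g : Sym2 V} (he₂ : e ∈ c₂.edges)
    (hg₁ : g ∈ c₁.edges) (hg₂ : g ∉ c₂.edges) :
    ∃ (w : V) (c : G.Walk w w), c.IsCycle ∧ g ∈ c.edges ∧ e ∉ c.edges ∧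
      ∀ f ∈ c.edges, f ∈ c₁.edges ∨ f ∈ c₂.edges := by
  cases g with | h a b
  cases e with | h x y
  obtain ⟨p, hp⟩ := h₁.exists_walk_of_mem_edges hg₁
  obtain ⟨q, hq⟩ := h₂.exists_walk_of_mem_edges he₂
  obtain ⟨r, hr⟩ := p.exists_walk_replace_edge q
  have hr' : ∀ f ∈ r.edges, f ≠ s(x, y) ∧ f ≠ s(a, b) ∧ (f ∈ c₁.edges ∨ f ∈ c₂.edges) := by
    intro f hf
    rcases hr f hf with ⟨hfp, hne⟩ | hfq
    · exact ⟨hne, (hp f hfp).2, Or.inl (hp f hfp).1⟩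
    · exact ⟨(hq f hfq).2, ne_of_mem_of_not_mem (hq f hfq).1 hg₂, Or.inr (hq f hfq).1⟩
  obtain ⟨c, hc, hgc, hcr⟩ :=
    (c₁.adj_of_mem_edges hg₁).exists_isCycle_of_walk r fun h => (hr' _ h).2.1 rfl
  refine ⟨b, c, hc, hgc, fun hec => ?_, fun f hf => ?_⟩
  · rcases hcr _ hec with h | h
    · exact hg₂ (h ▸ he₂)
    · exact (hr' _ h).1 rfl
  · rcases hcr f hf with rfl | h
    · exact Or.inl hg₁
    · exact (hr' f h).2.2

end SimpleGraph

namespace MSF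

variable {V : Type*} {G : SimpleGraph V} {lab lab' : G.edgeSet → ℝ} {e f g : G.edgeSet}

theorem Z_le_ofReal {v : V} {c : G.Walk v v} (hc : c.IsCycle) (hec : (e : Sym2 V) ∈ c.edges)
    {x : ℝ} (hx : ∀ f : G.edgeSet, (f : Sym2 V) ∈ c.edges → f ≠ e → lab f ≤ x) :
    Z G lab e ≤ ENNReal.ofReal x :=
  (iInf₂_le v ⟨c, hc, hec⟩).trans <| sSup_le <| by
    rintro _ ⟨f, hf, hfe, rfl⟩
    exact ENNReal.ofReal_le_ofReal (hx f hf hfe)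

theorem exists_isCycle_of_Z_lt {x : ENNReal} (h : Z G lab e < x) :
    ∃ (v : V) (c : G.Walk v v), c.IsCycle ∧ (e : Sym2 V) ∈ c.edges ∧
      ∀ f : G.edgeSet, (f : Sym2 V) ∈ c.edges → f ≠ e → ENNReal.ofReal (lab f) < x := by
  obtain ⟨v, hv⟩ := iInf_lt_iff.mp h
  obtain ⟨⟨c, hc, hec⟩, hlt⟩ := iInf_lt_iff.mp hv
  refine ⟨v, c, hc, hec, fun f hf hfe => lt_of_le_of_lt (le_sSup ?_) hlt⟩
  exact ⟨f, hf, hfe, rfl⟩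

theorem attains_of_phi_eq_some (h : phi G lab e = some f) : Attains G lab e f := by
  unfold phi at h
  split_ifs at h with hex
  exact Option.some_inj.mp h ▸ hex.choose_spec

theorem phi_eq_some_of_attains (hinj : Function.Injective lab) (hnn : ∀ f, 0 ≤ lab f)
    (h : Attains G lab e f) : phi G lab e = some f := by
  have hex : ∃ f, Attains G lab e f := ⟨f, h⟩
  rw [phi, dif_pos hex, Option.some_inj]
  exact hinj <| (ENNReal.ofReal_eq_ofReal_iff (hnn _) (hnn _)).mp
    (hex.choose_spec.2.1.trans h.2.1.symm)

theorem mem_setFF_of_ofReal_lt_Z (hagree : ∀ f, f ≠ e → lab' f = lab f)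
    (hlt : ENNReal.ofReal (lab' e) < Z G lab e) : e ∈ setFF G lab' := by
  rintro ⟨v, c, hc, hec, hmax⟩
  refine hlt.not_ge (Z_le_ofReal hc hec fun f hf hfe => ?_)
  rw [← hagree f hfe]
  exact hmax f hf

theorem notMem_setFF_of_attains (hagree : ∀ f, f ≠ e → lab' f = lab f)
    (hlt : ENNReal.ofReal (lab' e) < Z G lab e) (hf : Attains G lab e f) :
    f ∉ setFF G lab' := by
  obtain ⟨hfe, hZ, v, c, hc, -, hfc, hmax⟩ := hf
  refine fun hmem => hmem ⟨v, c, hc, hfc, fun f' hf' => ?_⟩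
  rw [hagree f hfe]
  by_cases hf'e : f' = e
  · rw [hf'e]
    rw [← hZ] at hlt
    exact (ENNReal.ofReal_lt_ofReal_iff'.mp hlt).1.le
  · rw [hagree f' hf'e]
    exact hmax f' hf' hf'e

theorem exists_isCycle_notMem_of_ne_phi (hinj : Function.Injective lab)
    (hnn : ∀ f, 0 ≤ lab f) (hge : g ≠ e) (hphi : phi G lab e ≠ some g) {v : V}
    {c : G.Walk v v} (hc : c.IsCycle) (hgc : (g : Sym2 V) ∈ c.edges)
    (hec : (e : Sym2 V) ∈ c.edges)
    (hmax : ∀ f : G.edgeSet, (f : Sym2 V) ∈ c.edges → f ≠ e → lab f ≤ lab g) :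
    ∃ (w : V) (c' : G.Walk w w), c'.IsCycle ∧ (g : Sym2 V) ∈ c'.edges ∧
      (e : Sym2 V) ∉ c'.edges ∧ ∀ f : G.edgeSet, (f : Sym2 V) ∈ c'.edges → lab f ≤ lab g := by
  have hZlt : Z G lab e < ENNReal.ofReal (lab g) :=
    (Z_le_ofReal hc hec hmax).lt_of_ne fun hZ =>
      hphi (phi_eq_some_of_attains hinj hnn ⟨hge, hZ.symm, v, c, hc, hec, hgc, hmax⟩)
  obtain ⟨v₂, c₂, hc₂, hec₂, hlt₂⟩ := exists_isCycle_of_Z_lt hZlt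
  have hlab₂ : ∀ f : G.edgeSet, (f : Sym2 V) ∈ c₂.edges → f ≠ e → lab f < lab g :=
    fun f hf hfe => (ENNReal.ofReal_lt_ofReal_iff_of_nonneg (hnn f)).mp (hlt₂ f hf hfe)
  obtain ⟨w, c', hc', hgc', hec', hsub⟩ :=
    hc.strong_elimination hc₂ hec₂ hgc fun h => lt_irrefl _ (hlab₂ g h hge)
  refine ⟨w, c', hc', hgc', hec', fun f hf => ?_⟩
  have hfe : f ≠ e := by rintro rfl; exact hec' hf
  rcases hsub _ hf with h | h
  exacts [hmax f h hfe, (hlab₂ f h hfe).le]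

theorem notMem_setFF_iff_of_ne_phi {μ : G.edgeSet → ℝ} (hagree : ∀ f, f ≠ e → μ f = lab f)
    (hinj : Function.Injective lab) (hnn : ∀ f, 0 ≤ lab f) (hge : g ≠ e)
    (hphi : phi G lab e ≠ some g) :
    g ∉ setFF G μ ↔ ∃ (v : V) (c : G.Walk v v), c.IsCycle ∧ (g : Sym2 V) ∈ c.edges ∧
      (e : Sym2 V) ∉ c.edges ∧ ∀ f : G.edgeSet, (f : Sym2 V) ∈ c.edges → lab f ≤ lab g := by
  rw [setFF, Set.mem_ofPred_eq, not_not]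
  constructor
  · rintro ⟨v, c, hc, hgc, hmax⟩
    have hmax' : ∀ f : G.edgeSet, (f : Sym2 V) ∈ c.edges → f ≠ e → lab f ≤ lab g :=
      fun f hf hfe => by rw [← hagree f hfe, ← hagree g hge]; exact hmax f hf
    by_cases hec : (e : Sym2 V) ∈ c.edges
    · exact exists_isCycle_notMem_of_ne_phi hinj hnn hge hphi hc hgc hec hmax'
    · exact ⟨v, c, hc, hgc, hec, fun f hf => hmax' f hf (by rintro rfl; exact hec hf)⟩
  · rintro ⟨v, c, hc, hgc, hec, hmax⟩
    refine ⟨v, c, hc, hgc, fun f hf => ?_⟩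
    have hfe : f ≠ e := by rintro rfl; exact hec hf
    rw [hagree f hfe, hagree g hge]
    exact hmax f hf

theorem setFF_eq_of_not_mem_of_lt_general
    {V : Type*} (G : SimpleGraph V)
    (e : G.edgeSet) (lab lab' : G.edgeSet → ℝ)
    (hinj : Function.Injective lab)
    (hrange : ∀ e' : G.edgeSet, lab e' ∈ Set.Icc (0 : ℝ) 1)
    (hagree : ∀ e' : G.edgeSet, e' ≠ e → lab' e' = lab e')
    (hlt : ENNReal.ofReal (lab' e) < Z G lab e) :
    setFF G lab' = (setFF G lab ∪ {e}) \ {f | phi G lab e = some f} := by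
  have hnn : ∀ f, 0 ≤ lab f := fun f => (hrange f).1
  ext g
  simp only [Set.mem_sdiff, Set.mem_union, Set.mem_singleton_iff, Set.mem_ofPred_eq]
  by_cases hge : g = e
  · subst hge
    have hphi : phi G lab g ≠ some g := fun h => (attains_of_phi_eq_some h).1 rfl
    simp [mem_setFF_of_ofReal_lt_Z hagree hlt, hphi]
  by_cases hphi : phi G lab e = some g
  · simp [hphi, notMem_setFF_of_attains hagree hlt (attains_of_phi_eq_some hphi)]
  · have hlab' := notMem_setFF_iff_of_ne_phi hagree hinj hnn hge hphi
    have hlab := notMem_setFF_iff_of_ne_phi (fun _ _ => rfl) hinj hnn hge hphi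
    simp only [hge, hphi, or_false, not_false_eq_true, and_true]
    rw [← not_iff_not, hlab', hlab]

/-- If `e ∉ F_F(lab)` and `lab' e < Z_lab(e)` then
`F_F(lab') = (F_F(lab) ∪ {e}) \ {φ(e,lab)}`. -/
theorem setFF_eq_of_not_mem_of_lt
    {V : Type*} (G : SimpleGraph V) (hconn : G.Connected)
    (hlf : ∀ v : V, (G.neighborSet v).Finite)
    (e : G.edgeSet) (lab lab' : G.edgeSet → ℝ)
    (hinj : Function.Injective lab) (hinj' : Function.Injective lab')
    (hrange : ∀ e' : G.edgeSet, lab e' ∈ Set.Icc (0 : ℝ) 1)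
    (hrange' : ∀ e' : G.edgeSet, lab' e' ∈ Set.Icc (0 : ℝ) 1)
    (hagree : ∀ e' : G.edgeSet, e' ≠ e → lab' e' = lab e')
    (hmem : e ∉ setFF G lab) (hlt : ENNReal.ofReal (lab' e) < Z G lab e) :
    setFF G lab' = (setFF G lab ∪ {e}) \ {f | phi G lab e = some f} :=
  setFF_eq_of_not_mem_of_lt_general G e lab lab' hinj hrange hagree hlt

end MSF
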